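/- arXiv:1701.01420 — 2 statements merged into one kernel-verified Lean document; each statement's English description precedes it below -/
import Mathlib

section
/- Let γ be a graph with half-edges, let 𝒱 ⊆ Ver be a subset of its vertices, and let C ∈ π₀(γ,𝒱) be a connected component of the induced subgraph γ_𝒱. If f is a flag with ε(f) ∉ 𝒱 and ε(ϑ(f)) ∈ C that disconnects C from the rest of γ, then the edge {f, ϑ(f)} is the unique crossing edge of C in γ. Consequently, the map assigning to each flag f ∈ F°_γ(𝒱) the connected component of γ_𝒱 containing ε(ϑ(f)) is injective. -/
/-- The set of edges of a graph with half-edges: unordered pairs `{f, ϑ f}`. -/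
def edgeSet {F : Type*} (ϑ : F → F) : Set (Set F) :=
  {e | ∃ f, e = {f, ϑ f}}

/-- The edges both of whose flags have ε-image in `S`. -/
def edgesIn {V F : Type*} (ε : F → V) (ϑ : F → F) (S : Set V) : Set (Set F) :=
  {e | ∃ f, e = {f, ϑ f} ∧ ε f ∈ S ∧ ε (ϑ f) ∈ S}

/-- One-step adjacency in the graph: `v` and `v'` are the two endpoints of an edge. -/
def Step {V F : Type*} (ε : F → V) (ϑ : F → F) (v v' : V) : Prop :=
  ∃ f, ε f = v ∧ ε (ϑ f) = v'

/-- The graph is connected: any two distinct vertices are joined by a chain of edges. -/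
def IsConnectedGraph {V F : Type*} (ε : F → V) (ϑ : F → F) : Prop :=
  ∀ v v' : V, v ≠ v' → Relation.ReflTransGen (Step ε ϑ) v v'

/-- One-step adjacency within the induced subgraph on the vertex subset `S`. -/
def StepIn {V F : Type*} (ε : F → V) (ϑ : F → F) (S : Set V) (v v' : V) : Prop :=
  v ∈ S ∧ v' ∈ S ∧ ∃ f, ε f = v ∧ ε (ϑ f) = v'

/-- The connected component of `v` in the induced subgraph on `S`. -/
def component {V F : Type*} (ε : F → V) (ϑ : F → F) (S : Set V) (v : V) : Set V :=
  {w | Relation.ReflTransGen (StepIn ε ϑ S) v w}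

/-- `π₀(γ,S)`: the set of connected components of the induced subgraph on `S`. -/
def pi0 {V F : Type*} (ε : F → V) (ϑ : F → F) (S : Set V) : Set (Set V) :=
  {C | ∃ v ∈ S, C = component ε ϑ S v}

/-- The crossing edges of a subset `C` of vertices: edges with exactly one flag
having ε-image in `C`. -/
def crossingEdges {V F : Type*} (ε : F → V) (ϑ : F → F) (C : Set V) : Set (Set F) :=
  {e | ∃ f, e = {f, ϑ f} ∧ ε f ∉ C ∧ ε (ϑ f) ∈ C}

/-- One-step adjacency in the graph obtained by deleting the two flags `f₀`, `ϑ f₀`. -/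
def StepAvoid {V F : Type*} (ε : F → V) (ϑ : F → F) (f₀ : F) (v v' : V) : Prop :=
  ∃ g, g ≠ f₀ ∧ g ≠ ϑ f₀ ∧ ε g = v ∧ ε (ϑ g) = v'

/-- The flag `f₀` disconnects `C` from the rest of the graph: after deleting the flags
`f₀` and `ϑ f₀`, there is no chain of edges from a vertex of `C` to a vertex outside `C`. -/
def Disconnects {V F : Type*} (ε : F → V) (ϑ : F → F) (C : Set V) (f₀ : F) : Prop :=
  ∀ v ∈ C, ∀ v' ∉ C, ¬ Relation.ReflTransGen (StepAvoid ε ϑ f₀) v v'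

/-- `F°_γ(S)`: the flags `f` with `ε f ∉ S` that disconnect from the rest of the graph
the connected component of the induced subgraph on `S` containing `ε (ϑ f)`. -/
def Fcirc {V F : Type*} (ε : F → V) (ϑ : F → F) (S : Set V) : Set F :=
  {f | ε f ∉ S ∧ ε (ϑ f) ∈ S ∧ Disconnects ε ϑ (component ε ϑ S (ε (ϑ f))) f}

/-- `F†_γ(S)`: the flags of `F°_γ(S)` whose associated component carries no marked label. -/
def Fdagger {V F L : Type*} (ε : F → V) (ϑ : F → F) (εS : L → V) (S : Set V) : Set F :=
  {f | f ∈ Fcirc ε ϑ S ∧ ∀ s : L, εS s ∉ component ε ϑ S (ε (ϑ f))}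

/-!
A crossing edge of `C` other than `{f, ϑ f}` survives the deletion of `f` and `ϑ f` and joins
`C` to its complement in a single step, so `f` disconnecting `C` forces it to be the only one.
If two flags of `F°_γ(𝒱)` give the same component `C`, the edge of the second is then a crossing
edge of `C`, hence the edge of the first; since both flags point out of `𝒱`, they coincide.
-/

section HalfEdgeGraph

variable {V F : Type*} {ε : F → V} {ϑ : F → F}

theorem component_subset {S : Set V} {v : V} (hv : v ∈ S) : component ε ϑ S v ⊆ S := by
  intro w hw
  induction hw with
  | refl => exact hv
  | tail _ hstep _ => exact hstep.2.1

theorem mem_component_self (S : Set V) (v : V) : v ∈ component ε ϑ S v :=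
  Relation.ReflTransGen.refl

theorem subset_of_mem_pi0 {S C : Set V} (hC : C ∈ pi0 ε ϑ S) : C ⊆ S := by
  obtain ⟨v, hv, rfl⟩ := hC
  exact component_subset hv

theorem Disconnects.eq_of_mem_crossingEdges (hinv : Function.Involutive ϑ) {C : Set V} {f : F}
    (hdis : Disconnects ε ϑ C f) {e : Set F} (he : e ∈ crossingEdges ε ϑ C) :
    e = {f, ϑ f} := by
  obtain ⟨g, rfl, hg_out, hg_in⟩ := he
  by_cases hgf : g = f
  · rw [hgf]
  by_cases hgϑf : g = ϑ f
  · rw [hgϑf, hinv f, Set.pair_comm]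
  exfalso
  refine hdis _ hg_in _ hg_out (Relation.ReflTransGen.single ⟨ϑ g, ?_, ?_, rfl, by rw [hinv g]⟩)
  · exact fun h => hgϑf (by rw [← h, hinv])
  · exact fun h => hgf (hinv.injective h)

theorem Fcirc_injOn (hinv : Function.Involutive ϑ) (S : Set V) :
    Set.InjOn (fun f => component ε ϑ S (ε (ϑ f))) (Fcirc ε ϑ S) := by
  rintro f₁ ⟨-, hf₁_in, hdis⟩ f₂ ⟨hf₂_out, hf₂_in, -⟩ hcomp
  set K := component ε ϑ S (ε (ϑ f₁))
  have hf₂K : ε (ϑ f₂) ∈ K := by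
    rw [show K = _ from hcomp]
    exact mem_component_self S _
  have hcross : ({f₂, ϑ f₂} : Set F) ∈ crossingEdges ε ϑ K :=
    ⟨f₂, rfl, fun h => hf₂_out (component_subset hf₁_in h), hf₂K⟩
  have hf₂_mem : f₂ ∈ ({f₁, ϑ f₁} : Set F) := by
    rw [← hdis.eq_of_mem_crossingEdges hinv hcross]
    exact Set.mem_insert _ _
  rcases hf₂_mem with h | h
  · exact h.symm
  · exact absurd (h ▸ hf₁_in) hf₂_out

end HalfEdgeGraph

theorem stmt0_general {V F : Type*}
    (ε : F → V) (ϑ : F → F) (hinv : Function.Involutive ϑ)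
    (𝒱 : Set V) (C : Set V) (hC : C ∈ pi0 ε ϑ 𝒱)
    (f : F) (hf1 : ε f ∉ 𝒱) (hf2 : ε (ϑ f) ∈ C)
    (hdis : Disconnects ε ϑ C f) :
    (({f, ϑ f} : Set F) ∈ crossingEdges ε ϑ C ∧
      ∀ e ∈ crossingEdges ε ϑ C, e = ({f, ϑ f} : Set F)) ∧
    (∀ f₁ ∈ Fcirc ε ϑ 𝒱, ∀ f₂ ∈ Fcirc ε ϑ 𝒱,
      component ε ϑ 𝒱 (ε (ϑ f₁)) = component ε ϑ 𝒱 (ε (ϑ f₂)) → f₁ = f₂) :=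
  ⟨⟨⟨f, rfl, fun h => hf1 (subset_of_mem_pi0 hC h), hf2⟩,
      fun _ he => hdis.eq_of_mem_crossingEdges hinv he⟩,
    fun _ h₁ _ h₂ hcomp => Fcirc_injOn hinv 𝒱 h₁ h₂ hcomp⟩

/-- If `f` is a flag with `ε f ∉ 𝒱` and `ε (ϑ f) ∈ C` for a connected
component `C` of the induced subgraph on `𝒱` which `f` disconnects from the rest of the
graph, then the edge `{f, ϑ f}` is the unique crossing edge of `C`; consequently, the map
assigning to each flag of `F°_γ(𝒱)` the component of `ε (ϑ f)` is injective. -/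
theorem stmt0 {V F : Type*} [Fintype V] [Fintype F]
    (ε : F → V) (ϑ : F → F) (hinv : Function.Involutive ϑ) (hfpf : ∀ f, ϑ f ≠ f)
    (𝒱 : Set V) (C : Set V) (hC : C ∈ pi0 ε ϑ 𝒱)
    (f : F) (hf1 : ε f ∉ 𝒱) (hf2 : ε (ϑ f) ∈ C)
    (hdis : Disconnects ε ϑ C f) :
    (({f, ϑ f} : Set F) ∈ crossingEdges ε ϑ C ∧
      ∀ e ∈ crossingEdges ε ϑ C, e = ({f, ϑ f} : Set F)) ∧
    (∀ f₁ ∈ Fcirc ε ϑ 𝒱, ∀ f₂ ∈ Fcirc ε ϑ 𝒱,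
      component ε ϑ 𝒱 (ε (ϑ f₁)) = component ε ϑ 𝒱 (ε (ϑ f₂)) → f₁ = f₂) :=
  stmt0_general ε ϑ hinv 𝒱 C hC f hf1 hf2 hdis
end

section
/- Let γ be a connected graph with half-edges and S ⊆ Ver. Then the number of edges of γ not contained in the induced subgraph on S satisfies |E(γ)| − |E_γ(S)| ≥ |Ver ∖ S| + |π₀(γ,S)| − 1. -/
/-!
Contract every connected component of `γ_S` to a point. The resulting graph is still connected;
its vertices are the components of `γ_S` together with the vertices outside `S`, and each of its
edges is the image of an edge of `γ` outside `E_γ(S)`. A connected graph on `n` vertices has at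
least `n - 1` edges.
-/

theorem Set.ncard_image_le_ncard_image_of_factorsThrough {α β γ : Type*} {s : Set α}
    {g₁ : α → β} {g₂ : α → γ} (hs : (g₂ '' s).Finite)
    (h : ∀ a ∈ s, ∀ b ∈ s, g₂ a = g₂ b → g₁ a = g₁ b) :
    (g₁ '' s).ncard ≤ (g₂ '' s).ncard := by
  rcases isEmpty_or_nonempty α with hα | hα
  · simp [Set.eq_empty_of_isEmpty s]
  refine Set.ncard_le_ncard_of_injOn (fun b => g₂ (Function.invFunOn g₁ s b))
    (fun b hb => Set.mem_image_of_mem g₂ (Function.invFunOn_mem hb)) ?_ hs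
  intro b hb b' hb' hbb'
  rw [← Function.invFunOn_eq hb, ← Function.invFunOn_eq hb']
  exact h _ (Function.invFunOn_mem hb) _ (Function.invFunOn_mem hb') hbb'

theorem Function.Involutive.sym2_eq_of_pair_eq {F W : Type*} {ϑ : F → F}
    (hinv : Function.Involutive ϑ) (p : F → W) {f g : F}
    (h : ({f, ϑ f} : Set F) = {g, ϑ g}) : s(p f, p (ϑ f)) = s(p g, p (ϑ g)) := by
  have hg : g ∈ ({f, ϑ f} : Set F) := h ▸ Set.mem_insert g _
  rcases hg with rfl | rfl
  · rfl
  · rw [hinv f, Sym2.eq_swap]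

section HalfEdgeGraph

variable {V W F : Type*} (ε : F → V) (ϑ : F → F)

/-- Identifying vertices along `q`; being a simple graph, it forgets the edges inside a fibre
of `q` and the multiplicity of parallel edges. -/
def contraction (q : V → W) : SimpleGraph W :=
  SimpleGraph.fromRel fun a b => ∃ f, q (ε f) = a ∧ q (ε (ϑ f)) = b

def contractedEdges (q : V → W) : Set (Set F) :=
  {e | ∃ f, e = {f, ϑ f} ∧ q (ε f) ≠ q (ε (ϑ f))}

variable {ε ϑ}

theorem IsConnectedGraph.connected_contraction [Nonempty W] (hconn : IsConnectedGraph ε ϑ)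
    {q : V → W} (hq : q.Surjective) : (contraction ε ϑ q).Connected := by
  have hlift : ∀ v w, Relation.ReflTransGen (Step ε ϑ) v w →
      Relation.ReflTransGen (contraction ε ϑ q).Adj (q v) (q w) := by
    refine Relation.ReflTransGen.lift' q fun v w ⟨f, hv, hw⟩ => ?_
    by_cases hvw : q v = q w
    · rw [Function.onFun, hvw]
    · exact .single ((SimpleGraph.fromRel_adj _ _ _).2 ⟨hvw, .inl ⟨f, hv ▸ rfl, hw ▸ rfl⟩⟩)
  refine SimpleGraph.Connected.mk fun a b => ?_
  obtain ⟨v, rfl⟩ := hq a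
  obtain ⟨w, rfl⟩ := hq b
  rw [SimpleGraph.reachable_iff_reflTransGen]
  by_cases hvw : v = w
  · exact hvw ▸ Relation.ReflTransGen.refl
  · exact hlift v w (hconn v w hvw)

theorem edgeSet_contraction_subset (q : V → W) :
    (contraction ε ϑ q).edgeSet ⊆
      (fun f => s(q (ε f), q (ε (ϑ f)))) '' {f | q (ε f) ≠ q (ε (ϑ f))} := by
  intro e he
  induction e using Sym2.ind with
  | _ a b =>
  obtain ⟨hab, ⟨f, rfl, rfl⟩ | ⟨f, rfl, rfl⟩⟩ :=
    (SimpleGraph.fromRel_adj _ _ _).1 ((SimpleGraph.mem_edgeSet _).1 he)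
  · exact ⟨f, hab, rfl⟩
  · exact ⟨f, Ne.symm hab, Sym2.eq_swap⟩

theorem contractedEdges_eq_image (q : V → W) :
    contractedEdges ε ϑ q = (fun f => ({f, ϑ f} : Set F)) '' {f | q (ε f) ≠ q (ε (ϑ f))} := by
  ext e
  constructor
  · rintro ⟨f, rfl, hf⟩
    exact ⟨f, hf, rfl⟩
  · rintro ⟨f, hf, rfl⟩
    exact ⟨f, rfl, hf⟩

theorem IsConnectedGraph.card_le_ncard_contractedEdges_add_one [Finite F]
    (hinv : Function.Involutive ϑ) (hconn : IsConnectedGraph ε ϑ) {q : V → W}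
    (hq : q.Surjective) : Nat.card W ≤ (contractedEdges ε ϑ q).ncard + 1 := by
  rcases isEmpty_or_nonempty W with hW | hW
  · simp
  calc Nat.card W ≤ Nat.card (contraction ε ϑ q).edgeSet + 1 :=
        (hconn.connected_contraction hq).card_vert_le_card_edgeSet_add_one
    _ ≤ ((fun f => s(q (ε f), q (ε (ϑ f)))) '' {f | q (ε f) ≠ q (ε (ϑ f))}).ncard + 1 := by
        rw [Nat.card_coe_set_eq]
        gcongr
        · exact Set.toFinite _
        · exact edgeSet_contraction_subset q
    _ ≤ (contractedEdges ε ϑ q).ncard + 1 := by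
        rw [contractedEdges_eq_image]
        gcongr
        exact Set.ncard_image_le_ncard_image_of_factorsThrough (Set.toFinite _)
          fun f _ g _ h => hinv.sym2_eq_of_pair_eq (q ∘ ε) h

end HalfEdgeGraph

section Components

variable {V F : Type*} {ε : F → V} {ϑ : F → F} {S : Set V}

theorem component_eq_of_stepIn (hinv : Function.Involutive ϑ) {v w : V}
    (h : StepIn ε ϑ S v w) : component ε ϑ S v = component ε ϑ S w := by
  obtain ⟨hv, hw, f, rfl, rfl⟩ := h
  have hback : StepIn ε ϑ S (ε (ϑ f)) (ε f) := ⟨hw, hv, ϑ f, rfl, by rw [hinv f]⟩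
  ext z
  exact ⟨.head hback, .head ⟨hv, hw, f, rfl, rfl⟩⟩

theorem component_of_notMem {v : V} (hv : v ∉ S) : component ε ϑ S v = {v} := by
  ext w
  constructor
  · intro h
    rcases h.cases_head with rfl | ⟨_, ⟨hv', -⟩, -⟩
    · rfl
    · exact absurd hv' hv
  · rintro rfl
    exact .refl

variable (ε ϑ S)

theorem edgesIn_subset_edgeSet : edgesIn ε ϑ S ⊆ edgeSet ϑ :=
  fun _ ⟨f, he, _⟩ => ⟨f, he⟩

theorem range_component :
    Set.range (component ε ϑ S) = pi0 ε ϑ S ∪ (fun v => {v}) '' Sᶜ := by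
  ext C
  constructor
  · rintro ⟨v, rfl⟩
    by_cases hv : v ∈ S
    · exact .inl ⟨v, hv, rfl⟩
    · exact .inr ⟨v, hv, (component_of_notMem hv).symm⟩
  · rintro (⟨v, hv, rfl⟩ | ⟨v, hv, rfl⟩)
    · exact ⟨v, rfl⟩
    · exact ⟨v, component_of_notMem hv⟩

theorem ncard_range_component [Finite V] :
    (Set.range (component ε ϑ S)).ncard = (pi0 ε ϑ S).ncard + Sᶜ.ncard := by
  have hdisj : Disjoint (pi0 ε ϑ S) ((fun v => ({v} : Set V)) '' Sᶜ) := by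
    rw [Set.disjoint_left]
    rintro C ⟨v, hv, rfl⟩ ⟨w, hw, hwv⟩
    have hvw : v ∈ component ε ϑ S v := .refl
    rw [← hwv, Set.mem_singleton_iff] at hvw
    exact hw (hvw ▸ hv)
  rw [range_component, Set.ncard_union_eq hdisj,
    Set.ncard_image_of_injective _ Set.singleton_injective]

variable {ε ϑ S}

theorem contractedEdges_component_subset (hinv : Function.Involutive ϑ) :
    contractedEdges ε ϑ (Set.rangeFactorization (component ε ϑ S)) ⊆
      edgeSet ϑ \ edgesIn ε ϑ S := by
  rintro e ⟨f, rfl, hf⟩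
  refine ⟨⟨f, rfl⟩, ?_⟩
  rintro ⟨g, hfg, hg, hϑg⟩
  have hcomp := component_eq_of_stepIn hinv ⟨hg, hϑg, g, rfl, rfl⟩
  have hf' : f ∈ ({g, ϑ g} : Set F) := hfg ▸ Set.mem_insert f _
  rcases hf' with rfl | rfl
  · exact hf (Subtype.ext hcomp)
  · rw [hinv g] at hf
    exact hf (Subtype.ext hcomp.symm)

end Components

theorem stmt5_general {V F : Type*} [Fintype V] [Fintype F]
    (ε : F → V) (ϑ : F → F) (hinv : Function.Involutive ϑ)
    (hconn : IsConnectedGraph ε ϑ)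
    (S : Set V) :
    ((Sᶜ : Set V).ncard : ℤ) + (pi0 ε ϑ S).ncard - 1 ≤
      ((edgeSet ϑ).ncard : ℤ) - (edgesIn ε ϑ S).ncard := by
  have hcontract := hconn.card_le_ncard_contractedEdges_add_one hinv
    (Set.rangeFactorization_surjective (f := component ε ϑ S))
  rw [Nat.card_coe_set_eq, ncard_range_component] at hcontract
  have hcrossing := Set.ncard_le_ncard (contractedEdges_component_subset (ε := ε) (S := S) hinv)
  have hsplit := Set.ncard_sdiff_add_ncard_of_subset (edgesIn_subset_edgeSet ε ϑ S)
  omega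

/-- For a connected graph with half-edges and a vertex subset `S`,
`|E(γ)| − |E_γ(S)| ≥ |Ver ∖ S| + |π₀(γ,S)| − 1`. -/
theorem stmt5 {V F : Type*} [Fintype V] [Fintype F]
    (ε : F → V) (ϑ : F → F) (hinv : Function.Involutive ϑ) (hfpf : ∀ f, ϑ f ≠ f)
    (hconn : IsConnectedGraph ε ϑ)
    (S : Set V) :
    ((Sᶜ : Set V).ncard : ℤ) + (pi0 ε ϑ S).ncard - 1 ≤
      ((edgeSet ϑ).ncard : ℤ) - (edgesIn ε ϑ S).ncard :=
  stmt5_general ε ϑ hinv hconn S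
end
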